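/- Let μ be any Möbius function for 𝒢, let n ≥ 1, and let H be a finite simple graph with |H| ≠ n − 1 and |H| ≠ n. Then μ(H, K_n) = 0 and μ(H, 𝐾̄_n) = 0; moreover, if n ≥ 3 then also μ(H, C_n) = 0. -/

import Mathlib

open SimpleGraph

/-- A finite simple graph, encoded by its number of vertices together with a
simple graph structure on `Fin n`. -/
def FinGraph : Type := Σ n : ℕ, SimpleGraph (Fin n)

namespace FinGraph

/-- The number of vertices of a graph. -/
def order (G : FinGraph) : ℕ := G.1

/-- Induced containment `H ⊴ G`: there is an injection of the vertices of `H`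
into the vertices of `G` which preserves and reflects adjacency (equivalently,
`H` is isomorphic to an induced subgraph of `G`). -/
def Contains (H G : FinGraph) : Prop :=
  ∃ f : Fin H.1 ↪ Fin G.1, ∀ a b : Fin H.1, G.2.Adj (f a) (f b) ↔ H.2.Adj a b

/-- Isomorphism of finite graphs. -/
def Iso (H G : FinGraph) : Prop := Nonempty (H.2 ≃g G.2)

/-- Package a simple graph on an arbitrary finite vertex type as a `FinGraph`. -/
noncomputable def of {V : Type} [Fintype V] (G : SimpleGraph V) : FinGraph :=
  ⟨Fintype.card V, G.comap ⇑(Fintype.equivFin V).symm⟩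

end FinGraph

/-- `T` is a transversal of the interval `[H,G]`: every member lies in `[H,G]`,
distinct members are non-isomorphic, and every graph in `[H,G]` is isomorphic to
a member of `T`. -/
def IsTransversal (H G : FinGraph) (T : Finset FinGraph) : Prop :=
  (∀ X ∈ T, H.Contains X ∧ X.Contains G) ∧
  (∀ X ∈ T, ∀ Y ∈ T, X ≠ Y → ¬ X.Iso Y) ∧
  (∀ X : FinGraph, H.Contains X → X.Contains G → ∃ Y ∈ T, X.Iso Y)

/-- `mu` is a Möbius function for the poset `𝒢` of all finite simple graphs up to
isomorphism, ordered by induced containment: it is isomorphism invariant, vanishes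
on non-comparable pairs, and for every `H ⊴ G` the sum of `mu H ·` over any
transversal of `[H,G]` is `1` if `H ≅ G` and `0` otherwise. -/
def IsMobius (mu : FinGraph → FinGraph → ℤ) : Prop :=
  (∀ H H' G G' : FinGraph, H.Iso H' → G.Iso G' → mu H G = mu H' G') ∧
  (∀ H G : FinGraph, ¬ H.Contains G → mu H G = 0) ∧
  (∀ H G : FinGraph, H.Contains G → ∀ T : Finset FinGraph, IsTransversal H G T →
    (H.Iso G → ∑ X ∈ T, mu H X = 1) ∧ (¬ H.Iso G → ∑ X ∈ T, mu H X = 0))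

/-!
`K_n`, `K̄_n` and `C_n` are vertex-transitive. For a vertex-transitive graph `G` on `n` vertices
all vertex-deleted subgraphs `G - v` are isomorphic, and every proper induced subgraph of `G` is
an induced subgraph of `G - v`. Hence `[H, G] = [H, G - v] ∪ {G}`, and subtracting the defining
sums over the two intervals gives `μ(H, G) = 0` unless `H ≅ G` or `H ≅ G - v`, that is, unless
`|H| ∈ {n - 1, n}`.
-/

namespace FinGraph

variable {G H K : FinGraph}

protected lemma Iso.refl (G : FinGraph) : G.Iso G := ⟨.refl⟩

protected lemma Iso.symm (h : G.Iso H) : H.Iso G := ⟨h.some.symm⟩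

protected lemma Iso.trans (h : G.Iso H) (h' : H.Iso K) : G.Iso K := ⟨h.some.trans h'.some⟩

protected lemma Contains.refl (G : FinGraph) : G.Contains G :=
  ⟨Function.Embedding.refl _, fun _ _ => Iff.rfl⟩

protected lemma Contains.trans (h : G.Contains H) (h' : H.Contains K) : G.Contains K := by
  obtain ⟨f, hf⟩ := h
  obtain ⟨g, hg⟩ := h'
  exact ⟨f.trans g, fun a b => (hg (f a) (f b)).trans (hf a b)⟩

lemma Iso.contains (h : G.Iso H) : G.Contains H :=
  ⟨h.some.toEquiv.toEmbedding, fun _ _ => h.some.map_adj_iff⟩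

lemma Iso.order_eq (h : G.Iso H) : G.order = H.order := by
  simpa [order] using Fintype.card_congr h.some.toEquiv

lemma Contains.order_le (h : G.Contains H) : G.order ≤ H.order := by
  simpa [order] using Fintype.card_le_of_embedding h.choose

lemma Contains.iso_of_order_eq (h : G.Contains H) (horder : G.order = H.order) : G.Iso H := by
  obtain ⟨f, hf⟩ := h
  have hbij : Function.Bijective f :=
    (Fintype.bijective_iff_injective_and_card f).2 ⟨f.injective, by simpa [order] using horder⟩
  exact ⟨⟨Equiv.ofBijective f hbij, hf _ _⟩⟩

lemma finite_setOf_order_le (m : ℕ) : {X : FinGraph | X.order ≤ m}.Finite :=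
  (Set.finite_Iic m).preimage' fun k _ =>
    (Set.finite_range (Sigma.mk k)).subset fun X (hX : X.1 = k) => by subst hX; exact ⟨X.2, rfl⟩

def isoSetoid : Setoid FinGraph := ⟨Iso, ⟨Iso.refl, Iso.symm, Iso.trans⟩⟩

noncomputable def canon (X : FinGraph) : FinGraph := (Quotient.mk isoSetoid X).out

lemma canon_iso (X : FinGraph) : (canon X).Iso X := Quotient.mk_out (s := isoSetoid) X

lemma canon_eq_of_iso {X Y : FinGraph} (h : X.Iso Y) : canon X = canon Y :=
  congrArg Quotient.out (Quotient.sound (s := isoSetoid) h)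

end FinGraph

open FinGraph

lemma exists_isTransversal (H G : FinGraph) : ∃ T, IsTransversal H G T := by
  classical
  have hfin : {X | H.Contains X ∧ X.Contains G}.Finite :=
    (finite_setOf_order_le G.order).subset fun X hX => hX.2.order_le
  refine ⟨hfin.toFinset.image canon, ?_, ?_, ?_⟩
  · simp only [Finset.mem_image, Set.Finite.mem_toFinset, Set.mem_ofPred_eq]
    rintro _ ⟨X, ⟨hHX, hXG⟩, rfl⟩
    exact ⟨hHX.trans (canon_iso X).symm.contains, (canon_iso X).contains.trans hXG⟩
  · simp only [Finset.mem_image]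
    rintro _ ⟨X, -, rfl⟩ _ ⟨Y, -, rfl⟩ hne hiso
    exact hne (canon_eq_of_iso ((canon_iso X).symm.trans (hiso.trans (canon_iso Y))))
  · intro X hHX hXG
    exact ⟨canon X, Finset.mem_image_of_mem _ (by simpa using ⟨hHX, hXG⟩), (canon_iso X).symm⟩

/-- For induced subgraphs, lying strictly below `G` is the same as having fewer vertices. -/
def IsGreatestProper (P G : FinGraph) : Prop :=
  P.Contains G ∧ P.order < G.order ∧ ∀ X : FinGraph, X.Contains G → X.order < G.order → X.Contains P

namespace IsTransversal

variable {H G P Z : FinGraph} {T : Finset FinGraph}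

lemma filter_not_order_lt (hT : IsTransversal H G T) (hZ : Z ∈ T) (hGZ : G.Iso Z) :
    T.filter (fun X => ¬ X.order < G.order) = {Z} := by
  ext X
  simp only [Finset.mem_filter, Finset.mem_singleton, not_lt]
  constructor
  · rintro ⟨hX, hGX⟩
    have hXG := (hT.1 X hX).2
    by_contra hne
    exact hT.2.1 X hX Z hZ hne ((hXG.iso_of_order_eq (hXG.order_le.antisymm hGX)).trans hGZ)
  · rintro rfl
    exact ⟨hZ, hGZ.order_eq.le⟩

lemma filter_order_lt (hT : IsTransversal H G T) (hP : IsGreatestProper P G) :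
    IsTransversal H P (T.filter (fun X => X.order < G.order)) := by
  obtain ⟨hPG, hlt, hbelow⟩ := hP
  refine ⟨fun X hX => ?_, fun X hX Y hY => ?_, fun X hHX hXP => ?_⟩
  · obtain ⟨hX, hXlt⟩ := Finset.mem_filter.1 hX
    exact ⟨(hT.1 X hX).1, hbelow X (hT.1 X hX).2 hXlt⟩
  · exact hT.2.1 X (Finset.mem_filter.1 hX).1 Y (Finset.mem_filter.1 hY).1
  · obtain ⟨Y, hY, hXY⟩ := hT.2.2 X hHX (hXP.trans hPG)
    have hYlt : Y.order < G.order := hXY.order_eq ▸ hXP.order_le.trans_lt hlt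
    exact ⟨Y, Finset.mem_filter.2 ⟨hY, hYlt⟩, hXY⟩

end IsTransversal

theorem IsMobius.eq_zero_of_isGreatestProper {mu : FinGraph → FinGraph → ℤ} (hmu : IsMobius mu)
    {H P G : FinGraph} (hP : IsGreatestProper P G) (hHG : ¬ H.Iso G) (hHP : ¬ H.Iso P) :
    mu H G = 0 := by
  classical
  by_cases hHleG : H.Contains G
  swap
  · exact hmu.2.1 H G hHleG
  have hHleP : H.Contains P :=
    hP.2.2 H hHleG (hHleG.order_le.lt_of_ne fun h => hHG (hHleG.iso_of_order_eq h))
  obtain ⟨T, hT⟩ := exists_isTransversal H G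
  obtain ⟨Z, hZ, hGZ⟩ := hT.2.2 G hHleG (Contains.refl G)
  have hsplit : ∑ X ∈ T, mu H X = mu H Z + ∑ X ∈ T.filter (fun X => X.order < G.order), mu H X := by
    rw [← Finset.sum_filter_not_add_sum_filter T (fun X => X.order < G.order),
      hT.filter_not_order_lt hZ hGZ, Finset.sum_singleton]
  have hsumG := (hmu.2.2 H G hHleG T hT).2 hHG
  have hsumP := (hmu.2.2 H P hHleP _ (hT.filter_order_lt hP)).2 hHP
  rw [hmu.1 H H G Z (Iso.refl H) hGZ]
  linarith

namespace SimpleGraph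

def IsVertexTransitive {V : Type*} (G : SimpleGraph V) : Prop := ∀ u v : V, ∃ φ : G ≃g G, φ u = v

variable {V : Type*} [DecidableEq V]

lemma isVertexTransitive_top : (⊤ : SimpleGraph V).IsVertexTransitive :=
  fun u v => ⟨Iso.completeGraph (Equiv.swap u v), Equiv.swap_apply_left u v⟩

lemma isVertexTransitive_bot : (⊥ : SimpleGraph V).IsVertexTransitive :=
  fun u v => ⟨⟨Equiv.swap u v, by simp⟩, Equiv.swap_apply_left u v⟩

lemma isVertexTransitive_cycleGraph : ∀ n : ℕ, (cycleGraph n).IsVertexTransitive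
  | 0 => fun u => u.elim0
  | _ + 1 => fun u v => ⟨⟨Equiv.addRight (v - u), by simp [cycleGraph_adj']⟩, add_sub_cancel u v⟩

end SimpleGraph

lemma isGreatestProper_comap_castSucc {m : ℕ} {G : SimpleGraph (Fin (m + 1))}
    (hG : G.IsVertexTransitive) : IsGreatestProper ⟨m, G.comap Fin.castSucc⟩ ⟨m + 1, G⟩ := by
  refine ⟨⟨Fin.castSuccEmb, fun _ _ => Iff.rfl⟩, Nat.lt_succ_self m, fun X ⟨f, hf⟩ hlt => ?_⟩
  obtain ⟨v, hv⟩ : ∃ v, ∀ a, f a ≠ v := by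
    by_contra! hsurj
    have := Fintype.card_le_of_surjective f hsurj
    simp only [Fintype.card_fin] at this
    exact (this.trans_lt hlt).false
  obtain ⟨φ, hφ⟩ := hG v (Fin.last m)
  have hlast : ∀ a, φ (f a) ≠ Fin.last m := fun a h => hv a (φ.injective (h.trans hφ.symm))
  let g : Fin X.1 → Fin m := fun a => (φ (f a)).castPred (hlast a)
  have hg : ∀ a : Fin X.1, (g a).castSucc = φ (f a) := fun a => Fin.castSucc_castPred _ _
  refine ⟨⟨g, fun a b hab => f.injective (φ.injective ?_)⟩, fun a b => ?_⟩
  · rw [← hg, ← hg, hab]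
  · change G.Adj (g a).castSucc (g b).castSucc ↔ _
    rw [hg, hg, φ.map_adj_iff]
    exact hf a b

/-- For `n ≥ 1` and `|H| ∉ {n-1, n}` we have `μ(H,K_n) = μ(H,K̄_n) = 0`, and
`μ(H,C_n) = 0` when moreover `n ≥ 3`. -/
theorem mobius_complete_empty_cycle (mu : FinGraph → FinGraph → ℤ)
    (hmu : IsMobius mu) (n : ℕ) (hn : 1 ≤ n) (H : FinGraph)
    (h1 : H.order ≠ n - 1) (h2 : H.order ≠ n) :
    mu H ⟨n, (⊤ : SimpleGraph (Fin n))⟩ = 0 ∧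
    mu H ⟨n, (⊥ : SimpleGraph (Fin n))⟩ = 0 ∧
    (3 ≤ n → mu H ⟨n, SimpleGraph.cycleGraph n⟩ = 0) := by
  obtain ⟨m, rfl⟩ : ∃ m, n = m + 1 := ⟨n - 1, by omega⟩
  rw [Nat.add_sub_cancel] at h1
  have key (G : SimpleGraph (Fin (m + 1))) (hG : G.IsVertexTransitive) : mu H ⟨m + 1, G⟩ = 0 :=
    hmu.eq_zero_of_isGreatestProper (isGreatestProper_comap_castSucc hG)
      (fun h => h2 h.order_eq) (fun h => h1 h.order_eq)
  exact ⟨key ⊤ isVertexTransitive_top, key ⊥ isVertexTransitive_bot,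
    fun _ => key _ (isVertexTransitive_cycleGraph _)⟩
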